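/- Let f : ℝ^n → ℝ be convex and L_f-smooth, g : ℝ^m → ℝ be μ_g-strongly convex and L_g-smooth, and A ∈ ℝ^{m×n} with λ_min(AᵀA) > 0. Then for all η > 0 satisfying η < 1/‖A‖ and η < C_M := μ_g λ_min(AᵀA) / (λ_min(AᵀA)λ_max(AAᵀ) + (1/4)(L_f+L_g)²‖A‖²), the saddle-point operator F(x,y) = (∇f(x)+Aᵀy, ∇g(y)-Ax) is strongly monotone with respect to the weighted inner product ⟨·,·⟩_{Φ_η}, where Φ_η = [[Iₙ, -ηAᵀ], [-ηA, I_m]]: there exists μ_η > 0 such that ⟨F(ω)-F(ω'), ω-ω'⟩_{Φ_η} ≥ μ_η ‖ω-ω'‖²_{Φ_η} for all ω, ω'. -/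

import Mathlib

/-!
Write `ω - ω' = (dx, dy)`. Expanding `⟨F ω - F ω', ω - ω'⟩_{Φ_η}`, the coupling terms
`±⟨Aᵀ dy, dx⟩` cancel; convexity of `f`, strong convexity of `g`, the Rayleigh bounds for
`AᵀA` and `AAᵀ` and the Lipschitz bounds on the gradients then bound the rest from below by the
quadratic form of `M_η` at `(‖dx‖, ‖dy‖)`. The bound on `η` is exactly `det M_η > 0`, so that
form is at least `c (‖dx‖² + ‖dy‖²)` with `c = det M_η / tr M_η > 0`. Since
`‖ω - ω'‖²_{Φ_η} ≤ (1 + η‖A‖) (‖dx‖² + ‖dy‖²)`, one may take `μ_η = c / (1 + η‖A‖)`.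
-/

noncomputable section
open Matrix

abbrev Evec (n : ℕ) := EuclideanSpace ℝ (Fin n)

/-- The operator (spectral) norm of a matrix. -/
noncomputable def opNorm {m n : ℕ} (A : Matrix (Fin m) (Fin n) ℝ) : ℝ :=
  ‖(Matrix.toEuclideanLin A).toContinuousLinearMap‖

noncomputable def qform {ι : Type*} [Fintype ι] [DecidableEq ι]
    (M : Matrix ι ι ℝ) (v : EuclideanSpace ℝ ι) : ℝ :=
  inner ℝ (Matrix.toEuclideanLin M v) v

noncomputable def lambdaMin {ι : Type*} [Fintype ι] [DecidableEq ι]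
    (M : Matrix ι ι ℝ) : ℝ :=
  ⨅ v : Metric.sphere (0 : EuclideanSpace ℝ ι) 1, qform M (v : EuclideanSpace ℝ ι)

noncomputable def lambdaMax {ι : Type*} [Fintype ι] [DecidableEq ι]
    (M : Matrix ι ι ℝ) : ℝ :=
  ⨆ v : Metric.sphere (0 : EuclideanSpace ℝ ι) 1, qform M (v : EuclideanSpace ℝ ι)

/-- The inner product weighted by `Φ_η = [[Iₙ, -ηAᵀ],[-ηA, I_m]]`:
`⟨u, v⟩_{Φ_η} = ⟨u₁ - ηAᵀu₂, v₁⟩ + ⟨u₂ - ηAu₁, v₂⟩`. -/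
noncomputable def wipEta {n m : ℕ} (η : ℝ) (A : Matrix (Fin m) (Fin n) ℝ)
    (u v : Evec n × Evec m) : ℝ :=
  (inner ℝ (u.1 - η • Matrix.toEuclideanLin Aᵀ u.2) v.1 : ℝ) +
    (inner ℝ (u.2 - η • Matrix.toEuclideanLin A u.1) v.2 : ℝ)

theorem toEuclideanLin_mul_apply {ι κ τ : Type*} [Fintype κ] [Fintype τ] [DecidableEq κ]
    [DecidableEq τ] (A : Matrix ι κ ℝ) (B : Matrix κ τ ℝ) (v : EuclideanSpace ℝ τ) :
    toEuclideanLin (A * B) v = toEuclideanLin A (toEuclideanLin B v) := by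
  simp [toLpLin_apply, mulVec_mulVec]

section Quadratic

variable {ι κ : Type*} [Fintype ι] [Fintype κ] [DecidableEq ι] [DecidableEq κ]

theorem inner_toEuclideanLin_transpose (A : Matrix ι κ ℝ) (u : EuclideanSpace ℝ ι)
    (v : EuclideanSpace ℝ κ) :
    inner ℝ (toEuclideanLin Aᵀ u) v = inner ℝ u (toEuclideanLin A v) := by
  rw [← conjTranspose_eq_transpose_of_trivial, toEuclideanLin_conjTranspose_eq_adjoint,
    LinearMap.adjoint_inner_left]

theorem qform_transpose_mul_self (A : Matrix ι κ ℝ) (v : EuclideanSpace ℝ κ) :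
    qform (Aᵀ * A) v = ‖toEuclideanLin A v‖ ^ 2 := by
  rw [qform, toEuclideanLin_mul_apply, inner_toEuclideanLin_transpose,
    real_inner_self_eq_norm_sq]

theorem qform_mul_transpose_self (A : Matrix ι κ ℝ) (u : EuclideanSpace ℝ ι) :
    qform (A * Aᵀ) u = ‖toEuclideanLin Aᵀ u‖ ^ 2 := by
  simpa using qform_transpose_mul_self Aᵀ u

theorem qform_smul (M : Matrix ι ι ℝ) (c : ℝ) (v : EuclideanSpace ℝ ι) :
    qform M (c • v) = c ^ 2 * qform M v := by
  simp only [qform, map_smul, real_inner_smul_left, real_inner_smul_right]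
  ring

theorem continuous_qform (M : Matrix ι ι ℝ) : Continuous (qform M) :=
  (toEuclideanLin M).toContinuousLinearMap.continuous.inner continuous_id

theorem isCompact_qform_image_sphere (M : Matrix ι ι ℝ) :
    IsCompact (Set.range fun v : Metric.sphere (0 : EuclideanSpace ℝ ι) 1 =>
      qform M (v : EuclideanSpace ℝ ι)) := by
  rw [← Set.image_eq_range]
  exact (isCompact_sphere 0 1).image (continuous_qform M)

theorem qform_eq_norm_sq_mul_qform_normalize (M : Matrix ι ι ℝ) {v : EuclideanSpace ℝ ι}
    (hv : v ≠ 0) : qform M v = ‖v‖ ^ 2 * qform M ((‖v‖⁻¹ : ℝ) • v) := by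
  rw [qform_smul, ← mul_assoc, ← mul_pow, mul_inv_cancel₀ (norm_ne_zero_iff.mpr hv), one_pow,
    one_mul]

theorem lambdaMin_mul_norm_sq_le_qform (M : Matrix ι ι ℝ) (v : EuclideanSpace ℝ ι) :
    lambdaMin M * ‖v‖ ^ 2 ≤ qform M v := by
  rcases eq_or_ne v 0 with rfl | hv
  · simp [qform]
  rw [qform_eq_norm_sq_mul_qform_normalize M hv, mul_comm]
  gcongr
  exact ciInf_le (isCompact_qform_image_sphere M).bddBelow
    ⟨_, mem_sphere_zero_iff_norm.mpr (norm_smul_inv_norm hv)⟩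

theorem qform_le_lambdaMax_mul_norm_sq (M : Matrix ι ι ℝ) (v : EuclideanSpace ℝ ι) :
    qform M v ≤ lambdaMax M * ‖v‖ ^ 2 := by
  rcases eq_or_ne v 0 with rfl | hv
  · simp [qform]
  rw [qform_eq_norm_sq_mul_qform_normalize M hv, mul_comm]
  gcongr
  exact le_ciSup (isCompact_qform_image_sphere M).bddAbove
    ⟨_, mem_sphere_zero_iff_norm.mpr (norm_smul_inv_norm hv)⟩

theorem lambdaMax_nonneg {M : Matrix ι ι ℝ} (hM : ∀ v, 0 ≤ qform M v) : 0 ≤ lambdaMax M :=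
  Real.iSup_nonneg fun v => hM v

end Quadratic

/-- `det / tr` bounds the smallest eigenvalue of `[[p, -q], [-q, r]]` from below. -/
theorem mul_sq_add_sq_le_of_det_pos {p q r c : ℝ} (hp : 0 < p) (hdet : q ^ 2 < p * r)
    (hc : c * (p + r) = p * r - q ^ 2) (a b : ℝ) :
    c * (a ^ 2 + b ^ 2) ≤ p * a ^ 2 + r * b ^ 2 - 2 * q * a * b := by
  have hr : 0 < r := pos_of_mul_pos_right ((sq_nonneg q).trans_lt hdet) hp.le
  have hpc : c < p := by nlinarith
  -- `(p - c)(r - c) - q² = c²`, so the shifted form is positive semidefinite.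
  have hshift : q ^ 2 ≤ (p - c) * (r - c) := by nlinarith [sq_nonneg c]
  nlinarith [sq_nonneg ((p - c) * a - q * b), mul_nonneg (sub_nonneg.mpr hshift) (sq_nonneg b)]

theorem exists_pos_mul_sq_add_sq_le {lam Lam μ L N η : ℝ} (hlam : 0 < lam) (hLam : 0 ≤ Lam)
    (hη : 0 < η) (hηlt : η < μ * lam / (lam * Lam + 1 / 4 * L ^ 2 * N ^ 2)) :
    ∃ c > 0, ∀ a b : ℝ,
      c * (a ^ 2 + b ^ 2) ≤ η * lam * a ^ 2 + (μ - η * Lam) * b ^ 2 - η * L * N * a * b := by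
  set D := lam * Lam + 1 / 4 * L ^ 2 * N ^ 2
  have hD : 0 < D := by
    refine lt_of_le_of_ne (by positivity) fun hD => ?_
    rw [← hD, div_zero] at hηlt
    exact hηlt.not_gt hη
  have hdet : (η * L * N / 2) ^ 2 < η * lam * (μ - η * Lam) := by
    have hdet_eq : η * lam * (μ - η * Lam) - (η * L * N / 2) ^ 2 = η * (μ * lam - η * D) := by
      ring
    rw [← sub_pos, hdet_eq]
    exact mul_pos hη (sub_pos.mpr ((lt_div_iff₀ hD).mp hηlt))
  have hsum : 0 < η * lam + (μ - η * Lam) :=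
    add_pos (mul_pos hη hlam) (pos_of_mul_pos_right ((sq_nonneg _).trans_lt hdet) (by positivity))
  refine ⟨(η * lam * (μ - η * Lam) - (η * L * N / 2) ^ 2) / (η * lam + (μ - η * Lam)),
    div_pos (sub_pos.mpr hdet) hsum, fun a b => ?_⟩
  convert mul_sq_add_sq_le_of_det_pos (mul_pos hη hlam) hdet (div_mul_cancel₀ _ hsum.ne') a b
    using 1
  ring

section Weighted

variable {n m : ℕ} (A : Matrix (Fin m) (Fin n) ℝ)

theorem opNorm_nonneg : 0 ≤ opNorm A :=
  norm_nonneg _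

theorem norm_toEuclideanLin_le_opNorm_mul (v : Evec n) :
    ‖toEuclideanLin A v‖ ≤ opNorm A * ‖v‖ :=
  (toEuclideanLin A).toContinuousLinearMap.le_opNorm v

theorem wipEta_self (η : ℝ) (u : Evec n) (v : Evec m) :
    wipEta η A (u, v) (u, v) = ‖u‖ ^ 2 + ‖v‖ ^ 2 - 2 * η * inner ℝ (toEuclideanLin A u) v := by
  simp only [wipEta, inner_sub_left, real_inner_smul_left, inner_toEuclideanLin_transpose,
    real_inner_self_eq_norm_sq]
  rw [real_inner_comm v]
  ring

theorem wipEta_self_le {η : ℝ} (hη : 0 ≤ η) (u : Evec n) (v : Evec m) :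
    wipEta η A (u, v) (u, v) ≤ (1 + η * opNorm A) * (‖u‖ ^ 2 + ‖v‖ ^ 2) := by
  have hcross : -(opNorm A * ‖u‖ * ‖v‖) ≤ inner ℝ (toEuclideanLin A u) v :=
    calc -(opNorm A * ‖u‖ * ‖v‖) ≤ -(‖toEuclideanLin A u‖ * ‖v‖) := by
          gcongr; exact norm_toEuclideanLin_le_opNorm_mul A u
      _ ≤ inner ℝ (toEuclideanLin A u) v := neg_le_of_abs_le (abs_real_inner_le_norm _ _)
  rw [wipEta_self]
  nlinarith [mul_le_mul_of_nonneg_left hcross hη,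
    mul_le_mul_of_nonneg_left (two_mul_le_add_sq ‖u‖ ‖v‖) (mul_nonneg hη (opNorm_nonneg A))]

theorem wipEta_saddle (η : ℝ) (p u : Evec n) (q v : Evec m) :
    wipEta η A (p + toEuclideanLin Aᵀ v, q - toEuclideanLin A u) (u, v) =
      inner ℝ p u + inner ℝ q v + η * (‖toEuclideanLin A u‖ ^ 2 - ‖toEuclideanLin Aᵀ v‖ ^ 2)
        - η * (inner ℝ q (toEuclideanLin A u) + inner ℝ (toEuclideanLin A p) v) := by
  simp only [wipEta, map_add, map_sub, inner_add_left, inner_sub_left, real_inner_smul_left,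
    inner_toEuclideanLin_transpose, real_inner_self_eq_norm_sq]
  have hAAt : inner ℝ (toEuclideanLin A (toEuclideanLin Aᵀ v)) v = ‖toEuclideanLin Aᵀ v‖ ^ 2 := by
    rw [real_inner_comm, ← inner_toEuclideanLin_transpose, real_inner_self_eq_norm_sq]
  linear_combination real_inner_comm (toEuclideanLin A u) v - η * hAAt

theorem wipEta_saddle_ge {η : ℝ} (hη : 0 ≤ η) {Lf Lg μ : ℝ} {p u : Evec n} {q v : Evec m}
    (hpu : 0 ≤ inner ℝ p u) (hp : ‖p‖ ≤ Lf * ‖u‖) (hqv : μ * ‖v‖ ^ 2 ≤ inner ℝ q v)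
    (hq : ‖q‖ ≤ Lg * ‖v‖) :
    η * lambdaMin (Aᵀ * A) * ‖u‖ ^ 2 + (μ - η * lambdaMax (A * Aᵀ)) * ‖v‖ ^ 2
        - η * (Lf + Lg) * opNorm A * ‖u‖ * ‖v‖ ≤
      wipEta η A (p + toEuclideanLin Aᵀ v, q - toEuclideanLin A u) (u, v) := by
  have hAu : lambdaMin (Aᵀ * A) * ‖u‖ ^ 2 ≤ ‖toEuclideanLin A u‖ ^ 2 :=
    qform_transpose_mul_self A u ▸ lambdaMin_mul_norm_sq_le_qform _ u
  have hAtv : ‖toEuclideanLin Aᵀ v‖ ^ 2 ≤ lambdaMax (A * Aᵀ) * ‖v‖ ^ 2 :=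
    qform_mul_transpose_self A v ▸ qform_le_lambdaMax_mul_norm_sq _ v
  have hqAu : inner ℝ q (toEuclideanLin A u) ≤ Lg * ‖v‖ * (opNorm A * ‖u‖) :=
    (real_inner_le_norm _ _).trans <| mul_le_mul hq (norm_toEuclideanLin_le_opNorm_mul A u)
      (norm_nonneg _) ((norm_nonneg q).trans hq)
  have hApv : inner ℝ (toEuclideanLin A p) v ≤ opNorm A * (Lf * ‖u‖) * ‖v‖ :=
    (real_inner_le_norm _ _).trans <| mul_le_mul_of_nonneg_right
      ((norm_toEuclideanLin_le_opNorm_mul A p).trans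
        (mul_le_mul_of_nonneg_left hp (opNorm_nonneg A))) (norm_nonneg v)
  rw [wipEta_saddle]
  nlinarith [mul_le_mul_of_nonneg_left hAu hη, mul_le_mul_of_nonneg_left hAtv hη,
    mul_le_mul_of_nonneg_left (add_le_add hqAu hApv) hη]

end Weighted

theorem saddle_operator_stronglyMonotone_weighted_general
    (n m : ℕ) (Lf Lg μg : ℝ)
    (A : Matrix (Fin m) (Fin n) ℝ) (hA : 0 < lambdaMin (Aᵀ * A))
    (f : Evec n → ℝ) (g : Evec m → ℝ)
    (hfconv : ∀ x x', (0 : ℝ) ≤ (inner ℝ (gradient f x - gradient f x') (x - x') : ℝ))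
    (hfsmooth : ∀ x x', ‖gradient f x - gradient f x'‖ ≤ Lf * ‖x - x'‖)
    (hg1 : ∀ y y', μg * ‖y - y'‖ ^ 2 ≤ (inner ℝ (gradient g y - gradient g y') (y - y') : ℝ))
    (hg2 : ∀ y y', ‖gradient g y - gradient g y'‖ ≤ Lg * ‖y - y'‖)
    (η : ℝ) (hη0 : 0 < η)
    (hη2 : η < μg * lambdaMin (Aᵀ * A) /
      (lambdaMin (Aᵀ * A) * lambdaMax (A * Aᵀ) + (1 / 4) * (Lf + Lg) ^ 2 * (opNorm A) ^ 2)) :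
    ∃ μη > (0 : ℝ), ∀ x x' y y',
      μη * wipEta η A (x - x', y - y') (x - x', y - y') ≤
        wipEta η A
          (gradient f x - gradient f x' + Matrix.toEuclideanLin Aᵀ (y - y'),
            gradient g y - gradient g y' - Matrix.toEuclideanLin A (x - x'))
          (x - x', y - y') := by
  have hΛ : 0 ≤ lambdaMax (A * Aᵀ) :=
    lambdaMax_nonneg fun v => qform_mul_transpose_self A v ▸ sq_nonneg _
  obtain ⟨c, hc, hcoercive⟩ := exists_pos_mul_sq_add_sq_le hA hΛ hη0 hη2
  have hΦ : 0 < 1 + η * opNorm A := by have := opNorm_nonneg A; positivity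
  refine ⟨c / (1 + η * opNorm A), div_pos hc hΦ, fun x x' y y' => ?_⟩
  calc c / (1 + η * opNorm A) * wipEta η A (x - x', y - y') (x - x', y - y')
      ≤ c / (1 + η * opNorm A) * ((1 + η * opNorm A) * (‖x - x'‖ ^ 2 + ‖y - y'‖ ^ 2)) := by
        gcongr
        exact wipEta_self_le A hη0.le _ _
    _ = c * (‖x - x'‖ ^ 2 + ‖y - y'‖ ^ 2) := by field_simp
    _ ≤ _ := (hcoercive _ _).trans
        (wipEta_saddle_ge A hη0.le (hfconv x x') (hfsmooth x x') (hg1 y y') (hg2 y y'))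

/-- For `η > 0` small enough (namely `η < 1/‖A‖` and `η < C_M`), the saddle-point
operator `F(x,y) = (∇f(x)+Aᵀy, ∇g(y)-Ax)` is strongly monotone with respect to the
weighted inner product `⟨·,·⟩_{Φ_η}`. -/
theorem saddle_operator_stronglyMonotone_weighted
    (n m : ℕ) (Lf Lg μg : ℝ) (hLf : 0 ≤ Lf) (hμg : 0 < μg) (hμLg : μg ≤ Lg)
    (A : Matrix (Fin m) (Fin n) ℝ) (hA : 0 < lambdaMin (Aᵀ * A))
    (f : Evec n → ℝ) (g : Evec m → ℝ)
    (hdf : ∀ x, HasGradientAt f (gradient f x) x)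
    (hdg : ∀ y, HasGradientAt g (gradient g y) y)
    (hfconv : ∀ x x', (0 : ℝ) ≤ (inner ℝ (gradient f x - gradient f x') (x - x') : ℝ))
    (hfsmooth : ∀ x x', ‖gradient f x - gradient f x'‖ ≤ Lf * ‖x - x'‖)
    (hg1 : ∀ y y', μg * ‖y - y'‖ ^ 2 ≤ (inner ℝ (gradient g y - gradient g y') (y - y') : ℝ))
    (hg2 : ∀ y y', ‖gradient g y - gradient g y'‖ ≤ Lg * ‖y - y'‖)
    (η : ℝ) (hη0 : 0 < η) (hη1 : η * opNorm A < 1)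
    (hη2 : η < μg * lambdaMin (Aᵀ * A) /
      (lambdaMin (Aᵀ * A) * lambdaMax (A * Aᵀ) + (1 / 4) * (Lf + Lg) ^ 2 * (opNorm A) ^ 2)) :
    ∃ μη > (0 : ℝ), ∀ x x' y y',
      μη * wipEta η A (x - x', y - y') (x - x', y - y') ≤
        wipEta η A
          (gradient f x - gradient f x' + Matrix.toEuclideanLin Aᵀ (y - y'),
            gradient g y - gradient g y' - Matrix.toEuclideanLin A (x - x'))
          (x - x', y - y') :=
  saddle_operator_stronglyMonotone_weighted_general n m Lf Lg μg A hA f g hfconv hfsmooth hg1 hg2 η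
    hη0 hη2
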